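/- arXiv:1206.0810 — 3 statements merged into one kernel-verified Lean document; each statement's English description precedes it below -/
import Mathlib

section
/- For ζ₁, ζ₂ ∈ ℂ with positive real parts, the complex Gaussian kernels satisfy the semigroup convolution identity χ_{ζ₁} * χ_{ζ₂} = χ_{ζ₁+ζ₂} on ℝⁿ. -/
/-!
Expanding `‖x - y‖² = ‖x‖² - 2⟪x, y⟫ + ‖y‖²` turns the integrand into a Gaussian in `y` with
coefficient `b = (4ζ₁)⁻¹ + (4ζ₂)⁻¹` and linear term `(2ζ₁)⁻¹ ⟪x, y⟫`, whose integral is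
`(π / b)^(n/2) exp (‖x‖² / (16 ζ₁² b))`. The exponents then combine to `-‖x‖² / (4(ζ₁ + ζ₂))`,
and the prefactors combine because `(4πζ₁)(4πζ₂) = 4π(ζ₁ + ζ₂) · π / b` with all factors in the
right half-plane, where the principal power is multiplicative.
-/

open MeasureTheory Real

open scoped RealInnerProductSpace

namespace Complex

lemma mul_cpow_of_re_pos {a b : ℂ} (ha : 0 < a.re) (hb : 0 < b.re) (s : ℂ) :
    (a * b) ^ s = a ^ s * b ^ s := by
  have hargs : arg a + arg b ∈ Set.Ioc (-π) π := by
    have h₁ := abs_lt.mp (abs_arg_lt_pi_div_two_iff.mpr (Or.inl ha))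
    have h₂ := abs_lt.mp (abs_arg_lt_pi_div_two_iff.mpr (Or.inl hb))
    constructor <;> linarith [h₁.1, h₁.2, h₂.1, h₂.2]
  rw [cpow_def_of_ne_zero (mul_ne_zero (ne_zero_of_re_pos ha) (ne_zero_of_re_pos hb)),
    cpow_def_of_ne_zero (ne_zero_of_re_pos ha), cpow_def_of_ne_zero (ne_zero_of_re_pos hb),
    ← exp_add, ← add_mul, log_mul (ne_zero_of_re_pos ha) (ne_zero_of_re_pos hb) hargs]

lemma inv_re_pos {z : ℂ} (hz : 0 < z.re) : 0 < z⁻¹.re := by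
  rw [inv_re]
  exact div_pos hz (normSq_pos.mpr (ne_zero_of_re_pos hz))

lemma re_inv_add_inv_pos {a b : ℂ} (ha : 0 < a.re) (hb : 0 < b.re) : 0 < (a⁻¹ + b⁻¹).re := by
  rw [add_re]
  exact add_pos (inv_re_pos ha) (inv_re_pos hb)

end Complex

section HeatKernel

open Complex Module

variable {V : Type*} [NormedAddCommGroup V] [InnerProductSpace ℝ V]

noncomputable def heatKernel (ζ : ℂ) (x : V) : ℂ :=
  (4 * π * ζ) ^ (-(finrank ℝ V : ℂ) / 2) * cexp (-‖x‖ ^ 2 / (4 * ζ))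

lemma heatKernel_sub_mul_heatKernel (ζ₁ ζ₂ : ℂ) (x y : V) :
    heatKernel ζ₁ (x - y) * heatKernel ζ₂ y =
      (4 * π * ζ₁) ^ (-(finrank ℝ V : ℂ) / 2) * (4 * π * ζ₂) ^ (-(finrank ℝ V : ℂ) / 2) *
        cexp (-‖x‖ ^ 2 / (4 * ζ₁)) *
        cexp (-((4 * ζ₁)⁻¹ + (4 * ζ₂)⁻¹) * ‖y‖ ^ 2 + (2 * ζ₁)⁻¹ * ⟪x, y⟫) := by
  have hnorm : (‖x - y‖ : ℂ) ^ 2 = ‖x‖ ^ 2 - 2 * ⟪x, y⟫ + ‖y‖ ^ 2 := by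
    exact_mod_cast norm_sub_sq_real x y
  rw [heatKernel, heatKernel, mul_mul_mul_comm, mul_assoc (_ * _), ← Complex.exp_add,
    ← Complex.exp_add, hnorm]
  ring_nf

lemma inv_four_mul_add_inv_four_mul {ζ₁ ζ₂ : ℂ} (h₁ : ζ₁ ≠ 0) (h₂ : ζ₂ ≠ 0) :
    (4 * ζ₁)⁻¹ + (4 * ζ₂)⁻¹ = (ζ₁ + ζ₂) / (4 * ζ₁ * ζ₂) := by
  field_simp
  ring

lemma heatKernel_exponent_add {ζ₁ ζ₂ : ℂ} (h₁ : ζ₁ ≠ 0) (h₂ : ζ₂ ≠ 0) (h₁₂ : ζ₁ + ζ₂ ≠ 0)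
    (r : ℂ) :
    -r / (4 * ζ₁) + (2 * ζ₁)⁻¹ ^ 2 * r / (4 * ((4 * ζ₁)⁻¹ + (4 * ζ₂)⁻¹)) =
      -r / (4 * (ζ₁ + ζ₂)) := by
  rw [inv_four_mul_add_inv_four_mul h₁ h₂]
  field_simp
  ring

lemma re_four_pi_mul_pos {ζ : ℂ} (h : 0 < ζ.re) : 0 < (4 * π * ζ).re := by
  simpa [mul_re] using mul_pos (mul_pos four_pos pi_pos) h

lemma heatKernel_prefactor_add {ζ₁ ζ₂ : ℂ} (h₁ : 0 < ζ₁.re) (h₂ : 0 < ζ₂.re) (s : ℂ) :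
    (4 * π * ζ₁) ^ (-s) * (4 * π * ζ₂) ^ (-s) * (π / ((4 * ζ₁)⁻¹ + (4 * ζ₂)⁻¹)) ^ s =
      (4 * π * (ζ₁ + ζ₂)) ^ (-s) := by
  have h₁₂ : 0 < (ζ₁ + ζ₂).re := by rw [add_re]; positivity
  have hπb : 0 < (π / ((4 * ζ₁)⁻¹ + (4 * ζ₂)⁻¹)).re := by
    rw [div_eq_mul_inv, re_ofReal_mul]
    exact mul_pos pi_pos (inv_re_pos (re_inv_add_inv_pos (by simpa using h₁) (by simpa using h₂)))
  have hsplit : (4 * π * ζ₁) * (4 * π * ζ₂) =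
      (4 * π * (ζ₁ + ζ₂)) * (π / ((4 * ζ₁)⁻¹ + (4 * ζ₂)⁻¹)) := by
    have := ne_zero_of_re_pos h₁₂
    rw [inv_four_mul_add_inv_four_mul (ne_zero_of_re_pos h₁) (ne_zero_of_re_pos h₂)]
    field_simp
  rw [← mul_cpow_of_re_pos (re_four_pi_mul_pos h₁) (re_four_pi_mul_pos h₂), hsplit,
    mul_cpow_of_re_pos (re_four_pi_mul_pos h₁₂) hπb, mul_assoc,
    ← cpow_add _ _ (ne_zero_of_re_pos hπb), neg_add_cancel, cpow_zero, mul_one]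

variable [FiniteDimensional ℝ V] [MeasurableSpace V] [BorelSpace V]

theorem integral_heatKernel_sub_mul_heatKernel {ζ₁ ζ₂ : ℂ} (h₁ : 0 < ζ₁.re) (h₂ : 0 < ζ₂.re)
    (x : V) : ∫ y, heatKernel ζ₁ (x - y) * heatKernel ζ₂ y = heatKernel (ζ₁ + ζ₂) x := by
  have hb : 0 < ((4 * ζ₁)⁻¹ + (4 * ζ₂)⁻¹).re :=
    re_inv_add_inv_pos (by simpa using h₁) (by simpa using h₂)
  simp_rw [heatKernel_sub_mul_heatKernel, integral_const_mul,
    GaussianFourier.integral_cexp_neg_mul_sq_norm_add hb]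
  have h₁₂ : ζ₁ + ζ₂ ≠ 0 := ne_zero_of_re_pos (by rw [add_re]; positivity)
  rw [heatKernel, neg_div, ← heatKernel_prefactor_add h₁ h₂,
    ← heatKernel_exponent_add (ne_zero_of_re_pos h₁) (ne_zero_of_re_pos h₂) h₁₂, Complex.exp_add]
  ring

end HeatKernel

theorem gaussian_convolution_semigroup (n : ℕ) (ζ₁ ζ₂ : ℂ) (h₁ : 0 < ζ₁.re) (h₂ : 0 < ζ₂.re)
    (χ : ℂ → EuclideanSpace ℝ (Fin n) → ℂ)
    (hχ : ∀ ζ x, χ ζ x =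
      (4 * (π : ℂ) * ζ) ^ (-(n : ℂ) / 2) * Complex.exp (-(‖x‖ : ℂ) ^ 2 / (4 * ζ)))
    (x : EuclideanSpace ℝ (Fin n)) :
    ∫ y, χ ζ₁ (x - y) * χ ζ₂ y = χ (ζ₁ + ζ₂) x := by
  have hχ_eq : χ = heatKernel := by
    funext ζ y
    rw [hχ, heatKernel, finrank_euclideanSpace_fin]
  rw [hχ_eq]
  exact integral_heatKernel_sub_mul_heatKernel h₁ h₂ x
end

section
/- Let w(x) = (1+‖x‖)^k with k ≥ 0, f : ℝⁿ → Y with f/w ∈ L^p(ℝⁿ, Y), and g : ℝⁿ → ℂ with w·g ∈ L^q(ℝⁿ, ℂ), where 1/p + 1/q = 1, 1 ≤ p ≤ ∞. Then for every x ∈ ℝⁿ the Bochner integral (g*f)(x) = ∫ g(x−y) f(y) dy exists, and ‖(g*f)(x)‖ ≤ w(x) · ‖w g‖_{L^q} · ‖f/w‖_{L^p}. -/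
open MeasureTheory Real
open scoped ENNReal

/-! Peetre's inequality `1 + ‖y‖ ≤ (1 + ‖x‖) (1 + ‖x - y‖)` gives `w y ≤ w x · w (x - y)`, hence
`‖g (x - y) • f y‖ ≤ w x · ‖(w g)(x - y)‖ · ‖(f / w)(y)‖` pointwise. The right-hand side is integrable
by Hölder's inequality, since `y ↦ x - y` preserves Lebesgue measure and hence the `L^q` norm of `w g`. -/

theorem one_add_norm_le_mul_one_add_norm_sub {E : Type*} [SeminormedAddCommGroup E] (x y : E) :
    1 + ‖y‖ ≤ (1 + ‖x‖) * (1 + ‖x - y‖) := by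
  have : ‖y‖ ≤ ‖x‖ + ‖x - y‖ := by simpa using norm_sub_le x (x - y)
  nlinarith [norm_nonneg x, norm_nonneg (x - y)]

theorem one_add_norm_rpow_le_mul {E : Type*} [SeminormedAddCommGroup E] {k : ℝ} (hk : 0 ≤ k)
    (x y : E) : (1 + ‖y‖) ^ k ≤ (1 + ‖x‖) ^ k * (1 + ‖x - y‖) ^ k := by
  rw [← mul_rpow (by positivity) (by positivity)]
  exact rpow_le_rpow (by positivity) (one_add_norm_le_mul_one_add_norm_sub x y) hk

theorem norm_smul_le_mul_norm_smul_inv_smul {Y : Type*} [NormedAddCommGroup Y] [NormedSpace ℂ Y]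
    {a b c : ℝ} (hb : 0 < b) (hc : 0 < c) (habc : c ≤ a * b) (z : ℂ) (v : Y) :
    ‖z • v‖ ≤ a * ‖((b : ℂ) * z) • ((c : ℂ)⁻¹ • v)‖ := by
  have hratio : 1 ≤ a * b * c⁻¹ := by rwa [← div_eq_mul_inv, one_le_div hc]
  calc ‖z • v‖ = 1 * (‖z‖ * ‖v‖) := by rw [one_mul, norm_smul]
    _ ≤ a * b * c⁻¹ * (‖z‖ * ‖v‖) := by gcongr
    _ = a * ‖((b : ℂ) * z) • ((c : ℂ)⁻¹ • v)‖ := by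
      simp only [norm_smul, norm_mul, norm_inv, Complex.norm_real, norm_of_nonneg hb.le,
        norm_of_nonneg hc.le]
      ring

theorem integral_norm_smul_le_mul_eLpNorm {α 𝕜 E : Type*} [MeasurableSpace α] {μ : Measure α}
    [NormedField 𝕜] [NormedAddCommGroup E] [NormedSpace 𝕜 E] {p q : ℝ≥0∞} [q.HolderTriple p 1]
    {φ : α → 𝕜} {F : α → E} (hφ : MemLp φ q μ) (hF : MemLp F p μ) :
    ∫ y, ‖(φ • F) y‖ ∂μ ≤ (eLpNorm φ q μ).toReal * (eLpNorm F p μ).toReal := by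
  rw [integral_norm_eq_lintegral_enorm (hF.smul (r := 1) hφ).1, ← eLpNorm_one_eq_lintegral_enorm,
    ← ENNReal.toReal_mul]
  exact ENNReal.toReal_mono (ENNReal.mul_ne_top hφ.eLpNorm_ne_top hF.eLpNorm_ne_top)
    (eLpNorm_smul_le_mul_eLpNorm hF.1 hφ.1)

section WeightedConvolution

variable {G Y : Type*} [MeasurableSpace G] [AddGroup G] [MeasurableAdd G] [MeasurableNeg G]
  {μ : Measure G} [μ.IsAddLeftInvariant] [μ.IsNegInvariant]
  [NormedAddCommGroup Y] [NormedSpace ℂ Y] {w : G → ℝ} {p q : ℝ≥0∞} [q.HolderTriple p 1]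
  {f : G → Y} {g : G → ℂ}

theorem integrable_and_norm_integral_le_of_le_mul_sub (hw_pos : ∀ z, 0 < w z)
    (hw_le : ∀ x y, w y ≤ w x * w (x - y))
    (hf : AEStronglyMeasurable f μ) (hg : AEStronglyMeasurable g μ)
    (hfw : MemLp (fun y => ((w y)⁻¹ : ℂ) • f y) p μ)
    (hwg : MemLp (fun y => (w y : ℂ) * g y) q μ) (x : G) :
    Integrable (fun y => g (x - y) • f y) μ ∧
      ‖∫ y, g (x - y) • f y ∂μ‖ ≤
        w x * (eLpNorm (fun y => (w y : ℂ) * g y) q μ).toReal *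
          (eLpNorm (fun y => ((w y)⁻¹ : ℂ) • f y) p μ).toReal := by
  have hsub := Measure.measurePreserving_sub_left μ x
  set φ : G → ℂ := fun y => (w (x - y) : ℂ) * g (x - y)
  set F : G → Y := fun y => ((w y)⁻¹ : ℂ) • f y
  have hφ : MemLp φ q μ := hwg.comp_measurePreserving hsub
  have hφF : Integrable (φ • F) μ := memLp_one_iff_integrable.mp (hfw.smul hφ)
  have hpointwise : ∀ y, ‖g (x - y) • f y‖ ≤ w x * ‖(φ • F) y‖ := fun y =>
    norm_smul_le_mul_norm_smul_inv_smul (hw_pos _) (hw_pos y) (hw_le x y) _ _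
  have hint : Integrable (fun y => g (x - y) • f y) μ :=
    (hφF.norm.const_mul (w x)).mono ((hg.comp_measurePreserving hsub).smul hf)
      (.of_forall fun y => (hpointwise y).trans (le_abs_self _))
  have hφ_norm : eLpNorm φ q μ = eLpNorm (fun y => (w y : ℂ) * g y) q μ :=
    eLpNorm_comp_measurePreserving (g := fun y => (w y : ℂ) * g y) hwg.1 hsub
  refine ⟨hint, ?_⟩
  calc ‖∫ y, g (x - y) • f y ∂μ‖ ≤ ∫ y, ‖g (x - y) • f y‖ ∂μ := norm_integral_le_integral_norm _
    _ ≤ ∫ y, w x * ‖(φ • F) y‖ ∂μ := integral_mono hint.norm (hφF.norm.const_mul _) hpointwise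
    _ = w x * ∫ y, ‖(φ • F) y‖ ∂μ := integral_const_mul _ _
    _ ≤ w x * ((eLpNorm φ q μ).toReal * (eLpNorm F p μ).toReal) :=
      mul_le_mul_of_nonneg_left (integral_norm_smul_le_mul_eLpNorm hφ hfw) (hw_pos x).le
    _ = _ := by rw [hφ_norm, mul_assoc]

end WeightedConvolution

theorem weighted_convolution_exists_and_bound_general (n : ℕ) (k : ℝ) (hk : 0 ≤ k)
    {Y : Type*} [NormedAddCommGroup Y] [NormedSpace ℂ Y]
    (w : EuclideanSpace ℝ (Fin n) → ℝ) (hw : ∀ x, w x = (1 + ‖x‖) ^ k)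
    (p q : ℝ≥0∞) (hpq : p⁻¹ + q⁻¹ = 1)
    (f : EuclideanSpace ℝ (Fin n) → Y) (hf : AEStronglyMeasurable f volume)
    (g : EuclideanSpace ℝ (Fin n) → ℂ) (hg : AEStronglyMeasurable g volume)
    (hfw : MemLp (fun x => ((w x)⁻¹ : ℂ) • f x) p volume)
    (hwg : MemLp (fun x => (w x : ℂ) * g x) q volume)
    (x : EuclideanSpace ℝ (Fin n)) :
    Integrable (fun y => g (x - y) • f y) volume ∧
      ‖∫ y, g (x - y) • f y‖ ≤
        w x * (eLpNorm (fun x => (w x : ℂ) * g x) q volume).toReal *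
          (eLpNorm (fun x => ((w x)⁻¹ : ℂ) • f x) p volume).toReal := by
  have : q.HolderTriple p 1 := ⟨by rw [inv_one, add_comm, hpq]⟩
  refine integrable_and_norm_integral_le_of_le_mul_sub (fun z => ?_) (fun x y => ?_) hf hg hfw hwg x
  · rw [hw]; positivity
  · simp only [hw]; exact one_add_norm_rpow_le_mul hk x y

theorem weighted_convolution_exists_and_bound (n : ℕ) (k : ℝ) (hk : 0 ≤ k)
    {Y : Type*} [NormedAddCommGroup Y] [NormedSpace ℂ Y] [CompleteSpace Y]
    (w : EuclideanSpace ℝ (Fin n) → ℝ) (hw : ∀ x, w x = (1 + ‖x‖) ^ k)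
    (p q : ℝ≥0∞) (hpq : p⁻¹ + q⁻¹ = 1) (hp : 1 ≤ p)
    (f : EuclideanSpace ℝ (Fin n) → Y) (hf : AEStronglyMeasurable f volume)
    (g : EuclideanSpace ℝ (Fin n) → ℂ) (hg : AEStronglyMeasurable g volume)
    (hfw : MemLp (fun x => ((w x)⁻¹ : ℂ) • f x) p volume)
    (hwg : MemLp (fun x => (w x : ℂ) * g x) q volume)
    (x : EuclideanSpace ℝ (Fin n)) :
    Integrable (fun y => g (x - y) • f y) volume ∧
      ‖∫ y, g (x - y) • f y‖ ≤
        w x * (eLpNorm (fun x => (w x : ℂ) * g x) q volume).toReal *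
          (eLpNorm (fun x => ((w x)⁻¹ : ℂ) • f x) p volume).toReal :=
  weighted_convolution_exists_and_bound_general n k hk w hw p q hpq f hf g hg hfw hwg x
end

section
/- If f/w ∈ L^p(ℝⁿ, Y) with 1 ≤ p < ∞ and w·g ∈ L^1(ℝⁿ, ℂ), then (g*f)(x) exists as a Bochner integral for almost every x ∈ ℝⁿ, (g*f)/w ∈ L^p(ℝⁿ, Y), and ‖(g*f)/w‖_{L^p} ≤ ‖w g‖_{L^1} · ‖f/w‖_{L^p}. -/
/-! Since `w` is submultiplicative and even, `w y ≤ w (x - y) * w x`, so pointwise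
`‖g (x - y) • f y‖ / w x ≤ ‖(w g) (x - y)‖ * ‖(f / w) y‖`. Hence `‖(g * f) / w‖` is dominated
by the convolution of `‖w g‖ ∈ L¹` with `‖f / w‖ ∈ Lᵖ`, and Young's inequality
`‖F ⋆ K‖_p ≤ ‖F‖_p ‖K‖₁`, proved for `ℝ≥0∞`-valued functions by Hölder's inequality against the
weight `K (x - ·)` followed by Tonelli, gives both the a.e. finiteness of the convolution
integral and the norm bound. -/

open MeasureTheory Real Filter
open scoped ENNReal

theorem ENNReal.rpow_lintegral_mul_le {α : Type*} [MeasurableSpace α] {μ : Measure α}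
    {F G : α → ℝ≥0∞} (hF : AEMeasurable F μ) (hG : AEMeasurable G μ) {r : ℝ} (hr : 1 ≤ r) :
    (∫⁻ a, F a * G a ∂μ) ^ r ≤ (∫⁻ a, G a ∂μ) ^ (r - 1) * ∫⁻ a, F a ^ r * G a ∂μ := by
  have hr0 : 0 < r := zero_lt_one.trans_le hr
  -- Hölder with exponents `1 - 1/r` and `1/r`, since `F G = G ^ (1 - 1/r) * (F ^ r G) ^ (1/r)`.
  have hsplit : ∀ a, F a * G a = G a ^ (1 - r⁻¹) * (F a ^ r * G a) ^ r⁻¹ := fun a => by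
    rw [ENNReal.mul_rpow_of_nonneg _ _ (inv_nonneg.2 hr0.le), ← ENNReal.rpow_mul,
      mul_inv_cancel₀ hr0.ne', ENNReal.rpow_one, mul_left_comm,
      ← ENNReal.rpow_add_of_nonneg _ _ (sub_nonneg.2 (inv_le_one_of_one_le₀ hr))
        (inv_nonneg.2 hr0.le), sub_add_cancel, ENNReal.rpow_one, mul_comm]
  have holder := ENNReal.lintegral_mul_norm_pow_le hG ((hF.pow_const r).mul hG)
    (sub_nonneg.2 (inv_le_one_of_one_le₀ hr)) (inv_nonneg.2 hr0.le) (sub_add_cancel 1 r⁻¹)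
  calc (∫⁻ a, F a * G a ∂μ) ^ r
      ≤ ((∫⁻ a, G a ∂μ) ^ (1 - r⁻¹) * (∫⁻ a, F a ^ r * G a ∂μ) ^ r⁻¹) ^ r := by
        simp_rw [hsplit]
        exact ENNReal.rpow_le_rpow holder hr0.le
    _ = (∫⁻ a, G a ∂μ) ^ (r - 1) * ∫⁻ a, F a ^ r * G a ∂μ := by
        rw [ENNReal.mul_rpow_of_nonneg _ _ hr0.le, ← ENNReal.rpow_mul, ← ENNReal.rpow_mul,
          sub_mul, inv_mul_cancel₀ hr0.ne', one_mul, ENNReal.rpow_one]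

theorem lintegral_lconvolution {E : Type*} [MeasurableSpace E] [AddGroup E]
    [MeasurableAdd₂ E] [MeasurableNeg E] {μ : Measure E} [SFinite μ] [μ.IsAddLeftInvariant]
    {F K : E → ℝ≥0∞} (hF : AEMeasurable F μ) (hK : AEMeasurable K μ) :
    ∫⁻ x, (F ⋆ₗ[μ] K) x ∂μ = (∫⁻ y, F y ∂μ) * ∫⁻ z, K z ∂μ := by
  simp_rw [lconvolution_def]
  rw [lintegral_lintegral_swap (by fun_prop)]
  have hK_shift : ∀ y, ∫⁻ x, F y * K (-y + x) ∂μ = F y * ∫⁻ z, K z ∂μ := fun y => by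
    rw [lintegral_const_mul'' (f := fun x => K (-y + x)) _ (hK.comp_quasiMeasurePreserving
      (measurePreserving_add_left μ _).quasiMeasurePreserving), lintegral_add_left_eq_self K]
  simp_rw [hK_shift]
  exact lintegral_mul_const'' _ hF

section LConvolution

variable {E : Type*} [MeasurableSpace E] [AddCommGroup E] [MeasurableAdd₂ E] [MeasurableNeg E]
  {μ : Measure E} [SFinite μ] [μ.IsAddLeftInvariant] [μ.IsNegInvariant]

theorem lintegral_rpow_lconvolution_le {F K : E → ℝ≥0∞} (hF : AEMeasurable F μ)
    (hK : AEMeasurable K μ) {r : ℝ} (hr : 1 ≤ r) :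
    ∫⁻ x, (F ⋆ₗ[μ] K) x ^ r ∂μ ≤ (∫⁻ y, F y ^ r ∂μ) * (∫⁻ z, K z ∂μ) ^ r := by
  have hKx : ∀ x, AEMeasurable (fun y => K (-y + x)) μ := fun x => by
    have h : AEMeasurable (fun y => K (x - y)) μ := hK.comp_quasiMeasurePreserving
      (Measure.measurePreserving_sub_left μ x).quasiMeasurePreserving
    simpa only [neg_add_eq_sub] using h
  have hKx_int : ∀ x, ∫⁻ y, K (-y + x) ∂μ = ∫⁻ z, K z ∂μ := fun x => by
    simpa only [neg_add_eq_sub] using lintegral_sub_left_eq_self K x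
  calc ∫⁻ x, (F ⋆ₗ[μ] K) x ^ r ∂μ
      ≤ ∫⁻ x, (∫⁻ z, K z ∂μ) ^ (r - 1) * ((fun y => F y ^ r) ⋆ₗ[μ] K) x ∂μ := by
        refine lintegral_mono fun x => ?_
        rw [lconvolution_def, lconvolution_def, ← hKx_int x]
        exact ENNReal.rpow_lintegral_mul_le hF (hKx x) hr
    _ = (∫⁻ y, F y ^ r ∂μ) * (∫⁻ z, K z ∂μ) ^ r := by
        rw [lintegral_const_mul'' _ (aemeasurable_lconvolution (hF.pow_const r) hK),
          lintegral_lconvolution (hF.pow_const r) hK, mul_left_comm]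
        congr 1
        simpa using (ENNReal.rpow_add_of_nonneg (x := ∫⁻ z, K z ∂μ) (r - 1) 1 (by linarith)
          zero_le_one).symm

theorem eLpNorm_lconvolution_le {F K : E → ℝ≥0∞} (hF : AEMeasurable F μ)
    (hK : AEMeasurable K μ) {p : ℝ≥0∞} (hp : 1 ≤ p) (hp' : p ≠ ∞) :
    eLpNorm (F ⋆ₗ[μ] K) p μ ≤ eLpNorm F p μ * eLpNorm K 1 μ := by
  have hp0 : p ≠ 0 := (zero_lt_one.trans_le hp).ne'
  have hr : 1 ≤ p.toReal := ENNReal.toReal_one ▸ ENNReal.toReal_mono hp' hp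
  have hr0 : 0 < p.toReal := zero_lt_one.trans_le hr
  simp only [eLpNorm_eq_lintegral_rpow_enorm_toReal hp0 hp', eLpNorm_one_eq_lintegral_enorm,
    enorm_eq_self]
  calc (∫⁻ x, (F ⋆ₗ[μ] K) x ^ p.toReal ∂μ) ^ (1 / p.toReal)
      ≤ ((∫⁻ y, F y ^ p.toReal ∂μ) * (∫⁻ z, K z ∂μ) ^ p.toReal) ^ (1 / p.toReal) :=
        ENNReal.rpow_le_rpow (lintegral_rpow_lconvolution_le hF hK hr) (by positivity)
    _ = (∫⁻ y, F y ^ p.toReal ∂μ) ^ (1 / p.toReal) * ∫⁻ z, K z ∂μ := by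
        rw [ENNReal.mul_rpow_of_nonneg _ _ (by positivity), ← ENNReal.rpow_mul,
          mul_one_div_cancel hr0.ne', ENNReal.rpow_one]

end LConvolution

theorem ae_lt_top_of_eLpNorm_lt_top {α : Type*} [MeasurableSpace α] {μ : Measure α}
    {h : α → ℝ≥0∞} (hh : AEMeasurable h μ) {p : ℝ≥0∞} (hp0 : p ≠ 0) (hp : p ≠ ∞)
    (hfin : eLpNorm h p μ < ∞) : ∀ᵐ x ∂μ, h x < ∞ := by
  have hint := lintegral_rpow_enorm_lt_top_of_eLpNorm_lt_top hp0 hp hfin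
  simp only [enorm_eq_self] at hint
  filter_upwards [ae_lt_top' (hh.pow_const _) hint.ne] with x hx
  exact (ENNReal.rpow_lt_top_iff_of_pos (ENNReal.toReal_pos hp0 hp)).1 hx

theorem one_add_norm_rpow_add_le {E : Type*} [SeminormedAddGroup E] {k : ℝ} (hk : 0 ≤ k)
    (x y : E) : (1 + ‖x + y‖) ^ k ≤ (1 + ‖x‖) ^ k * (1 + ‖y‖) ^ k := by
  rw [← Real.mul_rpow (by positivity) (by positivity)]
  refine Real.rpow_le_rpow (by positivity) ?_ hk
  nlinarith [norm_add_le x y, norm_nonneg x, norm_nonneg y]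

theorem enorm_inv_weight_mul_enorm_smul_le {E Y : Type*} [AddCommGroup E]
    [NormedAddCommGroup Y] [NormedSpace ℂ Y] {w : E → ℝ} (hw_pos : ∀ x, 0 < w x)
    (hw_add : ∀ x y, w (x + y) ≤ w x * w y) (hw_neg : ∀ x, w (-x) = w x)
    (f : E → Y) (g : E → ℂ) (x y : E) :
    ‖((w x)⁻¹ : ℂ)‖ₑ * ‖g (x - y) • f y‖ₑ ≤
      ‖((w y)⁻¹ : ℂ) • f y‖ₑ * ‖(w (x - y) : ℂ) * g (x - y)‖ₑ := by
  have hwy : w y ≤ w (x - y) * w x :=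
    calc w y = w (-(x - y) + x) := by rw [neg_sub, sub_add_cancel]
      _ ≤ w (-(x - y)) * w x := hw_add _ _
      _ = w (x - y) * w x := by rw [hw_neg]
  have hinv : (w x)⁻¹ ≤ w (x - y) / w y := by
    rw [inv_eq_one_div, div_le_div_iff₀ (hw_pos x) (hw_pos y), one_mul]
    exact hwy
  have hreal : ‖((w x)⁻¹ : ℂ)‖ * ‖g (x - y) • f y‖ ≤
      ‖((w y)⁻¹ : ℂ) • f y‖ * ‖(w (x - y) : ℂ) * g (x - y)‖ := by
    simp only [norm_smul, norm_mul, norm_inv, Complex.norm_real, Real.norm_of_nonneg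
      (hw_pos _).le]
    calc (w x)⁻¹ * (‖g (x - y)‖ * ‖f y‖)
        ≤ w (x - y) / w y * (‖g (x - y)‖ * ‖f y‖) := by gcongr
      _ = (w y)⁻¹ * ‖f y‖ * (w (x - y) * ‖g (x - y)‖) := by ring
  simpa only [← ofReal_norm, ← ENNReal.ofReal_mul (norm_nonneg _)] using
    ENNReal.ofReal_le_ofReal hreal

section Weighted

variable {E Y : Type*} [MeasurableSpace E] [AddCommGroup E] {μ : Measure E}
  [NormedAddCommGroup Y] [NormedSpace ℂ Y] {w : E → ℝ} {f : E → Y} {g : E → ℂ}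

theorem enorm_inv_weight_mul_lintegral_le_lconvolution (hw_pos : ∀ x, 0 < w x)
    (hw_add : ∀ x y, w (x + y) ≤ w x * w y) (hw_neg : ∀ x, w (-x) = w x) (x : E) :
    ‖((w x)⁻¹ : ℂ)‖ₑ * ∫⁻ y, ‖g (x - y) • f y‖ₑ ∂μ ≤
      ((fun y => ‖((w y)⁻¹ : ℂ) • f y‖ₑ) ⋆ₗ[μ] fun z => ‖(w z : ℂ) * g z‖ₑ) x := by
  rw [lconvolution_def, ← lintegral_const_mul' _ _ enorm_ne_top]
  refine lintegral_mono fun y => ?_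
  simpa only [neg_add_eq_sub] using enorm_inv_weight_mul_enorm_smul_le hw_pos hw_add hw_neg f g x y

variable [MeasurableAdd₂ E] [MeasurableNeg E] [SFinite μ] [μ.IsAddLeftInvariant]
  [μ.IsNegInvariant]

theorem weighted_convolution_Lp_of_submultiplicative (hw_pos : ∀ x, 0 < w x)
    (hw_meas : Measurable w) (hw_add : ∀ x y, w (x + y) ≤ w x * w y)
    (hw_neg : ∀ x, w (-x) = w x) {p : ℝ≥0∞} (hp : 1 ≤ p) (hp' : p ≠ ∞)
    (hf : AEStronglyMeasurable f μ) (hg : AEStronglyMeasurable g μ)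
    (hfw : MemLp (fun x => ((w x)⁻¹ : ℂ) • f x) p μ)
    (hwg : MemLp (fun x => (w x : ℂ) * g x) 1 μ) :
    (∀ᵐ x ∂μ, Integrable (fun y => g (x - y) • f y) μ) ∧
      MemLp (fun x => ((w x)⁻¹ : ℂ) • ∫ y, g (x - y) • f y ∂μ) p μ ∧
      eLpNorm (fun x => ((w x)⁻¹ : ℂ) • ∫ y, g (x - y) • f y ∂μ) p μ ≤
        eLpNorm (fun x => (w x : ℂ) * g x) 1 μ * eLpNorm (fun x => ((w x)⁻¹ : ℂ) • f x) p μ := by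
  set F := fun y => ‖((w y)⁻¹ : ℂ) • f y‖ₑ
  set K := fun z => ‖(w z : ℂ) * g z‖ₑ
  have hF : AEMeasurable F μ := hfw.1.enorm
  have hK : AEMeasurable K μ := hwg.1.enorm
  have hyoung : eLpNorm (F ⋆ₗ[μ] K) p μ ≤
      eLpNorm (fun x => (w x : ℂ) * g x) 1 μ * eLpNorm (fun x => ((w x)⁻¹ : ℂ) • f x) p μ := by
    rw [mul_comm, ← eLpNorm_enorm, ← eLpNorm_enorm (fun x => (w x : ℂ) * g x)]
    exact eLpNorm_lconvolution_le hF hK hp hp'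
  have hbound : eLpNorm (fun x => ((w x)⁻¹ : ℂ) • ∫ y, g (x - y) • f y ∂μ) p μ ≤
      eLpNorm (F ⋆ₗ[μ] K) p μ := eLpNorm_mono_enorm fun x => by
    rw [enorm_eq_self, enorm_smul]
    exact (mul_le_mul_right (enorm_integral_le_lintegral_enorm _) _).trans
      (enorm_inv_weight_mul_lintegral_le_lconvolution hw_pos hw_add hw_neg x)
  have hfinite := hyoung.trans_lt (ENNReal.mul_lt_top hwg.2 hfw.2)
  have hconv : AEStronglyMeasurable (fun x => ∫ y, g (x - y) • f y ∂μ) μ := by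
    simpa only [ContinuousLinearMap.flip_apply, ContinuousLinearMap.lsmul_apply] using
      (hf.convolution_integrand (ContinuousLinearMap.lsmul ℂ ℂ).flip hg).integral_prod_right'
  refine ⟨?_, ⟨?_, hbound.trans_lt hfinite⟩, hbound.trans hyoung⟩
  · filter_upwards [ae_lt_top_of_eLpNorm_lt_top (aemeasurable_lconvolution hF hK)
      (zero_lt_one.trans_le hp).ne' hp' hfinite] with x hx
    refine ⟨(hg.comp_quasiMeasurePreserving
      (Measure.measurePreserving_sub_left μ x).quasiMeasurePreserving).smul hf, ?_⟩
    refine ENNReal.lt_top_of_mul_ne_top_right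
      ((enorm_inv_weight_mul_lintegral_le_lconvolution hw_pos hw_add hw_neg x).trans_lt hx).ne ?_
    simpa using (hw_pos x).ne'
  · exact ((Complex.measurable_ofReal.comp hw_meas).inv.aestronglyMeasurable).smul hconv

end Weighted

theorem weighted_convolution_Lp_general (n : ℕ) (k : ℝ) (hk : 0 ≤ k)
    {Y : Type*} [NormedAddCommGroup Y] [NormedSpace ℂ Y]
    (w : EuclideanSpace ℝ (Fin n) → ℝ) (hw : ∀ x, w x = (1 + ‖x‖) ^ k)
    (p : ℝ≥0∞) (hp : 1 ≤ p) (hp' : p ≠ ∞)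
    (f : EuclideanSpace ℝ (Fin n) → Y) (hf : AEStronglyMeasurable f volume)
    (g : EuclideanSpace ℝ (Fin n) → ℂ) (hg : AEStronglyMeasurable g volume)
    (hfw : MemLp (fun x => ((w x)⁻¹ : ℂ) • f x) p volume)
    (hwg : MemLp (fun x => (w x : ℂ) * g x) 1 volume) :
    (∀ᵐ x : EuclideanSpace ℝ (Fin n) ∂volume, Integrable (fun y => g (x - y) • f y) volume) ∧
      MemLp (fun x => ((w x)⁻¹ : ℂ) • ∫ y, g (x - y) • f y) p volume ∧
      eLpNorm (fun x => ((w x)⁻¹ : ℂ) • ∫ y, g (x - y) • f y) p volume ≤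
        eLpNorm (fun x => (w x : ℂ) * g x) 1 volume *
          eLpNorm (fun x => ((w x)⁻¹ : ℂ) • f x) p volume := by
  obtain rfl : w = fun x => (1 + ‖x‖) ^ k := funext hw
  exact weighted_convolution_Lp_of_submultiplicative (fun x => by positivity) (by fun_prop)
    (one_add_norm_rpow_add_le hk) (fun x => by rw [norm_neg]) hp hp' hf hg hfw hwg

theorem weighted_convolution_Lp (n : ℕ) (k : ℝ) (hk : 0 ≤ k)
    {Y : Type*} [NormedAddCommGroup Y] [NormedSpace ℂ Y] [CompleteSpace Y]
    (w : EuclideanSpace ℝ (Fin n) → ℝ) (hw : ∀ x, w x = (1 + ‖x‖) ^ k)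
    (p : ℝ≥0∞) (hp : 1 ≤ p) (hp' : p ≠ ∞)
    (f : EuclideanSpace ℝ (Fin n) → Y) (hf : AEStronglyMeasurable f volume)
    (g : EuclideanSpace ℝ (Fin n) → ℂ) (hg : AEStronglyMeasurable g volume)
    (hfw : MemLp (fun x => ((w x)⁻¹ : ℂ) • f x) p volume)
    (hwg : MemLp (fun x => (w x : ℂ) * g x) 1 volume) :
    (∀ᵐ x : EuclideanSpace ℝ (Fin n) ∂volume, Integrable (fun y => g (x - y) • f y) volume) ∧
      MemLp (fun x => ((w x)⁻¹ : ℂ) • ∫ y, g (x - y) • f y) p volume ∧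
      eLpNorm (fun x => ((w x)⁻¹ : ℂ) • ∫ y, g (x - y) • f y) p volume ≤
        eLpNorm (fun x => (w x : ℂ) * g x) 1 volume *
          eLpNorm (fun x => ((w x)⁻¹ : ℂ) • f x) p volume :=
  weighted_convolution_Lp_general n k hk w hw p hp hp' f hf g hg hfw hwg
end
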